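/- arXiv:1702.05705 — 2 statements merged into one kernel-verified Lean document; each statement's English description precedes it below -/
import Mathlib

section
/- Let O be the real algebra with basis {e^x : x ∈ F_8} and multiplication e^x e^y = (-1)^{tr(y x^6)} e^{x+y}. For a = Σ_x a_x e^x define N(a) = Σ_x a_x^2. Then N(ab) = N(a)N(b) for all a, b ∈ O. -/
/-!
Expanding `N(ab) = Σ_z (Σ_x σ(x, z+x) a_x b_{z+x})²`, the diagonal terms `x = y` add up to
`N(a) N(b)`. For `x ≠ y` the shift `z ↦ z + x + y` swaps `b_{z+x}` and `b_{z+y}`, so the cross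
terms cancel in pairs as soon as `σ(x, z+x) σ(y, z+y) = -σ(x, z+y) σ(y, z+x)`. For
`σ(x, y) = (-1)^{tr(y x⁶)}` this says `tr((x+y)(x⁶+y⁶)) = 1`: since `x⁶ = x⁻¹`, the argument is
`s + s⁻¹` for the nontrivial 7th root of unity `s = x/y` (or `1` when `xy = 0`), and
`tr(s + s⁻¹) = s + s² + ⋯ + s⁶ = 1`.
-/

open scoped Classical
noncomputable section

abbrev F8 := GaloisField 2 3

instance : Fintype F8 := Fintype.ofFinite F8

def tr (x : F8) : F8 := x + x ^ 2 + x ^ 4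

/-- The sign `(-1)^{φ(x,y)}` where `φ(x,y) = tr(y x⁶)`. -/
def sgn (x y : F8) : ℝ := if tr (y * x ^ 6) = 0 then 1 else -1

/-- Multiplication of the twisted group algebra `ℝ_σ[F₈]`, on coordinates:
octonions are functions `F8 → ℝ`, and `e^x e^y = (-1)^{tr(y x⁶)} e^{x+y}`. -/
def omul (a b : F8 → ℝ) : F8 → ℝ := fun z => ∑ x : F8, sgn x (z + x) * a x * b (z + x)

/-- The basis element `e^x`. -/
def e (x : F8) : F8 → ℝ := fun w => if w = x then 1 else 0

/-- Octonion conjugation: `a* = Re(a) - Im(a)`. -/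
def conj (a : F8 → ℝ) : F8 → ℝ := fun w => if w = 0 then a 0 else - a w

/-- The norm `N(a) = Σ aₓ²`. -/
def N (a : F8 → ℝ) : ℝ := ∑ x : F8, (a x) ^ 2

section TwistedMul

variable {G : Type*} [AddCommGroup G] [Fintype G]

def twistedMul (s : G → G → ℝ) (a b : G → ℝ) (z : G) : ℝ :=
  ∑ x, s x (z + x) * a x * b (z + x)

variable {s : G → G → ℝ}

lemma sum_twisted_cross_eq_zero (h2 : ∀ x : G, x + x = 0)
    (hs : ∀ x y, x ≠ y → ∀ z, s x (z + x) * s y (z + y) + s x (z + y) * s y (z + x) = 0)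
    (b : G → ℝ) {x y : G} (hxy : x ≠ y) :
    ∑ z, s x (z + x) * s y (z + y) * (b (z + x) * b (z + y)) = 0 := by
  have hshift : ∑ z, s x (z + x) * s y (z + y) * (b (z + x) * b (z + y))
      = ∑ z, s x (z + y) * s y (z + x) * (b (z + y) * b (z + x)) := by
    refine Fintype.sum_equiv (Equiv.addRight (x + y)) _ _ fun z => ?_
    have hx : z + (x + y) + x = z + y := by rw [add_assoc, add_right_comm, h2, zero_add]
    have hy : z + (x + y) + y = z + x := by rw [add_assoc, add_assoc, h2, add_zero]
    simp only [Equiv.coe_addRight, hx, hy]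
  have hsum : ∑ z, (s x (z + x) * s y (z + y) * (b (z + x) * b (z + y))
      + s x (z + y) * s y (z + x) * (b (z + y) * b (z + x))) = 0 :=
    Finset.sum_eq_zero fun z _ => by linear_combination b (z + x) * b (z + y) * hs x y hxy z
  rw [Finset.sum_add_distrib, ← hshift] at hsum
  linarith

theorem sum_sq_twistedMul (h2 : ∀ x : G, x + x = 0) (hsq : ∀ x y, s x y ^ 2 = 1)
    (hs : ∀ x y, x ≠ y → ∀ z, s x (z + x) * s y (z + y) + s x (z + y) * s y (z + x) = 0)
    (a b : G → ℝ) : ∑ z, twistedMul s a b z ^ 2 = (∑ x, a x ^ 2) * ∑ y, b y ^ 2 := calc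
  ∑ z, twistedMul s a b z ^ 2
      = ∑ z, ∑ x, ∑ y, a x * a y * (s x (z + x) * s y (z + y) * (b (z + x) * b (z + y))) :=
    Finset.sum_congr rfl fun z _ => by
      rw [twistedMul, sq, Finset.sum_mul_sum]
      exact Finset.sum_congr rfl fun x _ => Finset.sum_congr rfl fun y _ => by ring
  _ = ∑ x, ∑ y, a x * a y * ∑ z, s x (z + x) * s y (z + y) * (b (z + x) * b (z + y)) := by
    rw [Finset.sum_comm]
    refine Finset.sum_congr rfl fun x _ => ?_
    rw [Finset.sum_comm]
    simp only [Finset.mul_sum]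
  _ = ∑ x, a x ^ 2 * ∑ z, b (z + x) ^ 2 := by
    refine Finset.sum_congr rfl fun x _ => ?_
    rw [Finset.sum_eq_single x (fun y _ hyx => by
      rw [sum_twisted_cross_eq_zero h2 hs b (Ne.symm hyx), mul_zero]) (by simp), Finset.mul_sum,
      Finset.mul_sum]
    refine Finset.sum_congr rfl fun z _ => ?_
    linear_combination (a x * b (z + x)) ^ 2 * hsq x (z + x)
  _ = (∑ x, a x ^ 2) * ∑ y, b y ^ 2 := by
    rw [Finset.sum_mul]
    exact Finset.sum_congr rfl fun x _ =>
      congrArg _ (Fintype.sum_equiv (Equiv.addRight x) _ _ fun _ => rfl)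

end TwistedMul

namespace F8

lemma card_eq : Fintype.card F8 = 8 := by simpa using GaloisField.card 2 3 (by norm_num)

lemma pow_eight (x : F8) : x ^ 8 = x := card_eq ▸ FiniteField.pow_card x

lemma pow_seven {x : F8} (hx : x ≠ 0) : x ^ 7 = 1 := by
  simpa [card_eq] using FiniteField.pow_card_sub_one_eq_one x hx

end F8

lemma tr_add (x y : F8) : tr (x + y) = tr x + tr y := by
  have h4 : (x + y) ^ 4 = x ^ 4 + y ^ 4 := add_pow_char_pow x y (p := 2) (n := 2)
  rw [tr, tr, tr, add_pow_char, h4]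
  ring

lemma tr_eq_zero_or_one (x : F8) : tr x = 0 ∨ tr x = 1 := by
  refine IsIdempotentElem.iff_eq_zero_or_one.mp ?_
  have hsq : tr x ^ 2 = tr (x ^ 2) := by
    simp only [tr, add_pow_char _ _ 2]
    ring
  show tr x * tr x = tr x
  rw [← sq, hsq, tr, ← pow_mul, ← pow_mul, show 4 * 2 = 8 from rfl, F8.pow_eight, tr]
  ring

lemma tr_one : tr 1 = 1 := by
  rw [tr]
  linear_combination CharTwo.two_eq_zero (R := F8)

lemma tr_add_pow_six {s : F8} (hs0 : s ≠ 0) (hs1 : s ≠ 1) : tr (s + s ^ 6) = 1 := by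
  have h7 := F8.pow_seven hs0
  have hgeom : 1 + s + s ^ 2 + s ^ 3 + s ^ 4 + s ^ 5 + s ^ 6 = 0 :=
    (mul_eq_zero.mp (show (s - 1) * (1 + s + s ^ 2 + s ^ 3 + s ^ 4 + s ^ 5 + s ^ 6) = 0 by
      linear_combination h7)).resolve_left (sub_ne_zero.mpr hs1)
  rw [tr_add, tr, tr]
  linear_combination hgeom - CharTwo.two_eq_zero (R := F8)
    + (s ^ 5 + s ^ 3 * (s ^ 14 + s ^ 7 + 1)) * h7

lemma tr_mul_add_pow_six {x y : F8} (hxy : x ≠ y) : tr ((x + y) * (x ^ 6 + y ^ 6)) = 1 := by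
  by_cases hy : y = 0
  · subst hy
    rw [show (x + 0) * (x ^ 6 + 0 ^ 6) = x ^ 7 by ring, F8.pow_seven hxy, tr_one]
  by_cases hx : x = 0
  · subst hx
    rw [show (0 + y) * (0 ^ 6 + y ^ 6) = y ^ 7 by ring, F8.pow_seven hy, tr_one]
  have hx7 := F8.pow_seven hx
  have hy7 := F8.pow_seven hy
  have hs1 : x * y ^ 6 ≠ 1 := fun h => hxy (by linear_combination y * h - x * hy7)
  rw [← tr_add_pow_six (mul_ne_zero hx (pow_ne_zero 6 hy)) hs1]
  congr 1
  linear_combination hx7 + hy7 + CharTwo.two_eq_zero (R := F8)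
    - x ^ 6 * y * (y ^ 28 + y ^ 21 + y ^ 14 + y ^ 7 + 1) * hy7

lemma sgn_sq (x y : F8) : sgn x y ^ 2 = 1 := by
  unfold sgn; split_ifs <;> norm_num

lemma sgn_mul_sgn (x y x' y' : F8) :
    sgn x y * sgn x' y' = if tr (y * x ^ 6 + y' * x' ^ 6) = 0 then 1 else -1 := by
  rw [sgn, sgn, tr_add]
  rcases tr_eq_zero_or_one (y * x ^ 6) with h | h <;>
    rcases tr_eq_zero_or_one (y' * x' ^ 6) with h' | h' <;>
    simp [h, h', CharTwo.add_self_eq_zero]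

lemma sgn_anticomm {x y : F8} (hxy : x ≠ y) (z : F8) :
    sgn x (z + x) * sgn y (z + y) + sgn x (z + y) * sgn y (z + x) = 0 := by
  rw [sgn_mul_sgn, sgn_mul_sgn]
  have htr :
      tr ((z + x) * x ^ 6 + (z + y) * y ^ 6) + tr ((z + y) * x ^ 6 + (z + x) * y ^ 6) = 1 := by
    rw [← tr_add, ← tr_mul_add_pow_six hxy]
    congr 1
    linear_combination z * (x ^ 6 + y ^ 6) * CharTwo.two_eq_zero (R := F8)
  rcases tr_eq_zero_or_one ((z + x) * x ^ 6 + (z + y) * y ^ 6) with h | h <;>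
    rw [h] at htr
  · simp [h, (zero_add _).symm.trans htr]
  · simp [h, add_eq_left.mp htr]

theorem norm_omul (a b : F8 → ℝ) : N (omul a b) = N a * N b :=
  sum_sq_twistedMul CharTwo.add_self_eq_zero sgn_sq (fun _ _ => sgn_anticomm) a b
end
end

section
/- Identify the power set 2^{F_8} with the F_2-vector space F_2^8 under symmetric difference, with the bilinear form β(X,Y) = |X ∩ Y| mod 2. For nonzero z ∈ F_8, let O_z be the set of 4-element subsets X with Σ_{x∈X} x = z, and let span(O_z) be the F_2-linear span of O_z. Then span(O_z) is a 4-dimensional subspace that is maximal isotropic: span(O_z) = span(O_z)^⊥. -/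
/-!
A 4-set `X ⊆ F₈` with `∑ X = z ≠ 0` never contains both `x` and `x + z` (the other two elements
would sum to `0`), so it picks exactly one point of each coset of `{0, z}`. Hence translation by `z`
maps `X \ Y` onto `Y \ X`; comparing sums gives `|X \ Y| • z = 0`, so `|X ∩ Y|` is even and
`span O_z` is isotropic, of dimension at most 4. Conversely, if `H` is a plane not containing `z`,
moving one point `u ∈ H` to `u + z` yields four sets in `O_z`, independent because `u + z` lies
only in the set obtained by moving `u`. An isotropic subspace of half the dimension of a
nondegenerate space is its own orthogonal.
-/

open scoped Classical
noncomputable section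

/-- The indicator function of a finite subset of `F8`, as a vector in `F₂⁸`. -/
def ind (X : Finset F8) : F8 → ZMod 2 := fun w => if w ∈ X then 1 else 0

open Finset Module

section BooleanGroup

variable {G : Type*} [AddCommGroup G] [Module (ZMod 2) G] {z : G}

theorem ZModModule.add_add_cancel_right (x y : G) : x + y + y = x := by
  rw [add_assoc, ZModModule.add_self, add_zero]

theorem ZModModule.even_of_nsmul_eq_zero {n : ℕ} (hz : z ≠ 0) (h : n • z = 0) : Even n := by
  rw [← Nat.cast_smul_eq_nsmul (ZMod 2), smul_eq_zero] at h
  exact (ZMod.natCast_eq_zero_iff_even).1 (h.resolve_right hz)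

variable [DecidableEq G] {X Y : Finset G} {x : G}

theorem Finset.add_notMem_of_sum_eq (hz : z ≠ 0) (hX : #X = 4) (hsum : ∑ x ∈ X, x = z)
    (hx : x ∈ X) : x + z ∉ X := by
  intro hxz
  have hxz' : x + z ∈ X.erase x := mem_erase.2 ⟨by simpa using hz, hxz⟩
  obtain ⟨a, b, hab, hrest⟩ : ∃ a b, a ≠ b ∧ (X.erase x).erase (x + z) = {a, b} := by
    rw [← card_eq_two, card_erase_of_mem hxz', card_erase_of_mem hx, hX]
  have hab0 : x + (x + z + (a + b)) = z := by
    rw [← sum_pair (f := fun u => u) hab, ← hrest, add_sum_erase _ (fun u => u) hxz',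
      add_sum_erase _ (fun u => u) hx, hsum]
  rw [← add_assoc x, ← add_assoc x, ZModModule.add_self, zero_add, add_eq_left] at hab0
  exact hab (by rw [eq_neg_of_add_eq_zero_left hab0, ZModModule.neg_eq_self])

theorem Finset.mem_iff_add_notMem_of_sum_eq [Fintype G] (hG : Fintype.card G = 8) (hz : z ≠ 0)
    (hX : #X = 4) (hsum : ∑ x ∈ X, x = z) (x : G) : x ∈ X ↔ x + z ∉ X := by
  refine ⟨add_notMem_of_sum_eq hz hX hsum, fun hxz => ?_⟩
  have hdisj : Disjoint X (X.image (· + z)) := by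
    simp only [disjoint_left, mem_image, not_exists, not_and]
    rintro _ hy y hy' rfl
    exact add_notMem_of_sum_eq hz hX hsum hy' hy
  have hcover : X ∪ X.image (· + z) = univ := by
    apply eq_univ_of_card
    rw [card_union_of_disjoint hdisj, card_image_of_injective _ (add_left_injective z), hX, hG]
  obtain hx | hx := mem_union.1 (hcover ▸ mem_univ x)
  · exact hx
  · obtain ⟨y, hy, rfl⟩ := mem_image.1 hx
    exact absurd (by rwa [ZModModule.add_add_cancel_right]) hxz

theorem Finset.even_card_inter_of_sum_eq [Fintype G] (hG : Fintype.card G = 8) (hz : z ≠ 0)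
    (hX : #X = 4) (hXsum : ∑ x ∈ X, x = z) (hY : #Y = 4) (hYsum : ∑ y ∈ Y, y = z) :
    Even #(X ∩ Y) := by
  have hXmem := mem_iff_add_notMem_of_sum_eq hG hz hX hXsum
  have hYmem := mem_iff_add_notMem_of_sum_eq hG hz hY hYsum
  have hswap : Y \ X = (X \ Y).image (· + z) := by
    ext v
    simp only [mem_sdiff, mem_image]
    constructor
    · rintro ⟨hvY, hvX⟩
      refine ⟨v + z, ⟨?_, ?_⟩, ZModModule.add_add_cancel_right v z⟩
      · simpa [hvX] using hXmem v
      · simpa [hvY] using hYmem v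
    · rintro ⟨u, ⟨huX, huY⟩, rfl⟩
      exact ⟨by simpa [huY] using hYmem u, (hXmem u).1 huX⟩
  have hshift : ∑ y ∈ Y \ X, y = ∑ x ∈ X \ Y, x + #(X \ Y) • z := by
    rw [hswap, sum_image fun _ _ _ _ => add_right_cancel, sum_add_distrib, sum_const]
  have hnsmul : #(X \ Y) • z = 0 := by
    have hX' := sum_inter_add_sum_sdiff X Y fun x => x
    have hY' := sum_inter_add_sum_sdiff Y X fun x => x
    rw [inter_comm, hshift, hYsum, ← add_assoc, hX', hXsum] at hY'
    simpa using hY'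
  have hcard := card_inter_add_card_sdiff X Y
  rw [hX] at hcard
  have hsdiff := ZModModule.even_of_nsmul_eq_zero hz hnsmul
  grind

end BooleanGroup

namespace LinearMap.BilinForm

theorem span_le_orthogonal_span {R M : Type*} [CommRing R] [AddCommGroup M] [Module R M]
    {B : LinearMap.BilinForm R M} {s : Set M} (h : ∀ x ∈ s, ∀ y ∈ s, B x y = 0) :
    Submodule.span R s ≤ B.orthogonal (Submodule.span R s) := by
  rw [Submodule.span_le]
  intro y hy
  rw [SetLike.mem_coe, mem_orthogonal_iff]
  intro x hx
  induction hx using Submodule.span_induction with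
  | mem x hx => exact h x hx y hy
  | zero => simp
  | add x x' _ _ hx hx' => simp [hx, hx']
  | smul c x _ hx => simp [hx]

variable {K V : Type*} [Field K] [AddCommGroup V] [Module K V] [FiniteDimensional K V]
  {B : LinearMap.BilinForm K V} {W : Submodule K V}

theorem two_mul_finrank_le_of_le_orthogonal (hB : B.Nondegenerate) (hW : W ≤ B.orthogonal W) :
    2 * finrank K W ≤ finrank K V := by
  have hle := Submodule.finrank_mono hW
  rw [finrank_orthogonal hB] at hle
  have hW' := W.finrank_le
  omega

theorem eq_orthogonal_of_le_orthogonal (hB : B.Nondegenerate) (hW : W ≤ B.orthogonal W)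
    (hdim : finrank K V ≤ 2 * finrank K W) : W = B.orthogonal W :=
  Submodule.eq_of_le_of_finrank_le hW (by rw [finrank_orthogonal hB]; omega)

end LinearMap.BilinForm

theorem nondegenerate_dotProductBilin {R n : Type*} [CommRing R] [Fintype n] :
    (dotProductBilin R R : LinearMap.BilinForm R (n → R)).Nondegenerate := by
  classical
  refine ⟨fun x hx => funext fun i => ?_, fun y hy => funext fun i => ?_⟩
  · simpa using hx (Pi.single i 1)
  · simpa using hy (Pi.single i 1)

theorem LinearIndependent.of_apply_eq_single {ι α R : Type*} [Semiring R] [DecidableEq ι]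
    {v : ι → α → R} (p : ι → α) (h : ∀ i j, v i (p j) = (Pi.single i 1 : ι → R) j) :
    LinearIndependent R v := by
  refine LinearIndependent.of_comp (LinearMap.funLeft R R p) ?_
  convert Pi.linearIndependent_single_one ι R
  exact funext (h _)

theorem exists_injective_linearMap_notMem_range {K V : Type*} [Field K] [AddCommGroup V]
    [Module K V] [FiniteDimensional K V] {n : ℕ} (hn : finrank K V = n + 1) {z : V}
    (hz : z ≠ 0) : ∃ L : (Fin n → K) →ₗ[K] V, Function.Injective L ∧ z ∉ LinearMap.range L := by
  obtain ⟨C, hC⟩ := (K ∙ z).exists_isCompl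
  have hCdim : finrank K (Fin n → K) = finrank K C := by
    have := Submodule.finrank_add_eq_of_isCompl hC
    rw [finrank_span_singleton hz] at this
    simp only [finrank_fin_fun]
    omega
  refine ⟨C.subtype ∘ₗ (LinearEquiv.ofFinrankEq _ _ hCdim).toLinearMap,
    C.injective_subtype.comp (LinearEquiv.injective _), ?_⟩
  rintro ⟨v, hv⟩
  refine hz ((Submodule.disjoint_def.1 hC.disjoint) z (Submodule.mem_span_singleton_self z) ?_)
  rw [← hv]
  exact Submodule.coe_mem _

section ImageAddSingle

variable {W G : Type*} [AddCommGroup W] [Module (ZMod 2) W] [AddCommGroup G] [Module (ZMod 2) G]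
  {L : W →ₗ[ZMod 2] G} {z : G}

theorem add_ne_of_notMem_range (hz : z ∉ LinearMap.range L) (u v : W) : L u + z ≠ L v :=
  fun h => hz ⟨v - u, by rw [map_sub, ← h, add_sub_cancel_left]⟩

variable [DecidableEq W]

theorem injective_add_single (hL : Function.Injective L) (hz : z ∉ LinearMap.range L) (w : W) :
    Function.Injective (⇑L + Pi.single w z) := by
  intro u v huv
  simp only [Pi.add_apply, Pi.single_apply] at huv
  by_cases hu : u = w <;> by_cases hv : v = w <;> simp only [hu, hv, if_true, if_false,
    add_zero] at huv
  · rw [hu, hv]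
  · exact absurd huv (add_ne_of_notMem_range hz w v)
  · exact absurd huv.symm (add_ne_of_notMem_range hz w u)
  · exact hL huv

variable [Fintype W] [DecidableEq G]

variable (L z) in
def imageAddSingle (w : W) : Finset G := univ.image (⇑L + Pi.single w z)

theorem card_imageAddSingle (hL : Function.Injective L) (hz : z ∉ LinearMap.range L) (w : W) :
    #(imageAddSingle L z w) = Fintype.card W :=
  card_image_of_injective _ (injective_add_single hL hz w)

theorem sum_imageAddSingle (hL : Function.Injective L) (hz : z ∉ LinearMap.range L) (w : W) :
    ∑ x ∈ imageAddSingle L z w, x = L (∑ v, v) + z := by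
  rw [imageAddSingle, sum_image (injective_add_single hL hz w).injOn, map_sum]
  simp only [Pi.add_apply, sum_add_distrib, Fintype.sum_pi_single']

theorem add_mem_imageAddSingle_iff (hL : Function.Injective L) (hz : z ∉ LinearMap.range L)
    (u w : W) : L u + z ∈ imageAddSingle L z w ↔ u = w := by
  simp only [imageAddSingle, mem_image, mem_univ, true_and, Pi.add_apply, Pi.single_apply]
  constructor
  · rintro ⟨v, hv⟩
    by_cases hvw : v = w
    · rw [if_pos hvw] at hv
      exact (hL (add_right_cancel hv)).symm.trans hvw
    · simp only [hvw, if_false, add_zero] at hv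
      exact absurd hv.symm (add_ne_of_notMem_range hz u v)
  · rintro rfl
    exact ⟨u, by simp⟩

end ImageAddSingle

theorem F8.card_eq_s17 : Fintype.card F8 = 8 := by
  rw [← Nat.card_eq_fintype_card, GaloisField.card 2 3 (by norm_num)]
  norm_num

theorem F8.finrank_eq : finrank (ZMod 2) F8 = 3 :=
  GaloisField.finrank 2 (by norm_num)

theorem sum_ind_mul_ind (X Y : Finset F8) : ∑ w, ind X w * ind Y w = #(X ∩ Y) := by
  simp only [ind, ite_mul, zero_mul, one_mul, ← ite_and, sum_boole]
  congr 2
  ext w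
  simp

theorem sum_ind_mul_ind_eq_zero {z : F8} (hz : z ≠ 0) {X Y : Finset F8} (hX : #X = 4)
    (hXsum : ∑ x ∈ X, x = z) (hY : #Y = 4) (hYsum : ∑ y ∈ Y, y = z) :
    ∑ w, ind X w * ind Y w = 0 := by
  rw [sum_ind_mul_ind, ZMod.natCast_eq_zero_iff_even]
  exact even_card_inter_of_sum_eq F8.card_eq_s17 hz hX hXsum hY hYsum

theorem linearIndependent_ind_imageAddSingle {W : Type*} [AddCommGroup W] [Module (ZMod 2) W]
    [Fintype W] [DecidableEq W] {L : W →ₗ[ZMod 2] F8} (hL : Function.Injective L) {z : F8}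
    (hz : z ∉ LinearMap.range L) :
    LinearIndependent (ZMod 2) fun w => ind (imageAddSingle L z w) :=
  .of_apply_eq_single (fun u => L u + z) fun w u => by
    simp [ind, add_mem_imageAddSingle_iff hL hz, Pi.single_apply]

theorem four_le_finrank_span_ind {z : F8} (hz : z ≠ 0) {s : Set (F8 → ZMod 2)}
    (hs : ∀ X : Finset F8, #X = 4 → ∑ x ∈ X, x = z → ind X ∈ s) :
    4 ≤ finrank (ZMod 2) (Submodule.span (ZMod 2) s) := by
  obtain ⟨L, hL, hzL⟩ := exists_injective_linearMap_notMem_range (n := 2) F8.finrank_eq hz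
  have hmem (w : Fin 2 → ZMod 2) : ind (imageAddSingle L z w) ∈ s := by
    refine hs _ (by simp [card_imageAddSingle hL hzL]) ?_
    rw [sum_imageAddSingle hL hzL, (by decide : ∑ v : Fin 2 → ZMod 2, v = 0), map_zero, zero_add]
  calc 4 = finrank (ZMod 2) (Submodule.span (ZMod 2) (Set.range
        fun w => ind (imageAddSingle L z w))) := by
        rw [finrank_span_eq_card (linearIndependent_ind_imageAddSingle hL hzL)]
        simp
    _ ≤ _ := Submodule.finrank_mono (Submodule.span_mono (Set.range_subset_iff.2 hmem))

theorem span_outer_sets_maximal_isotropic (z : F8) (hz : z ≠ 0) :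
    let Oz : Set (F8 → ZMod 2) :=
      {f | ∃ X : Finset F8, X.card = 4 ∧ ∑ x ∈ X, x = z ∧ f = ind X}
    Module.finrank (ZMod 2) (Submodule.span (ZMod 2) Oz) = 4 ∧
    (∀ g : F8 → ZMod 2, g ∈ Submodule.span (ZMod 2) Oz ↔
      ∀ f ∈ Submodule.span (ZMod 2) Oz, ∑ w : F8, f w * g w = 0) := by
  intro Oz
  let B : LinearMap.BilinForm (ZMod 2) (F8 → ZMod 2) := dotProductBilin (ZMod 2) (ZMod 2)
  have hB : B.Nondegenerate := nondegenerate_dotProductBilin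
  have hiso : Submodule.span (ZMod 2) Oz ≤ B.orthogonal (Submodule.span (ZMod 2) Oz) := by
    refine LinearMap.BilinForm.span_le_orthogonal_span ?_
    rintro _ ⟨X, hX, hXsum, rfl⟩ _ ⟨Y, hY, hYsum, rfl⟩
    exact sum_ind_mul_ind_eq_zero hz hX hXsum hY hYsum
  have hlower := four_le_finrank_span_ind (s := Oz) hz fun X hX hXsum => ⟨X, hX, hXsum, rfl⟩
  have hupper := B.two_mul_finrank_le_of_le_orthogonal hB hiso
  rw [Module.finrank_pi, F8.card_eq_s17] at hupper
  have heq := B.eq_orthogonal_of_le_orthogonal hB hiso <| by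
    rw [Module.finrank_pi, F8.card_eq_s17]; omega
  exact ⟨by omega, fun g => SetLike.ext_iff.1 heq g⟩
end
end
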